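/- arXiv:2602.12861 — 3 statements merged into one kernel-verified Lean document; each statement's English description precedes it below -/
import Mathlib

section
/- If L is a Lawson compact algebraic L-domain, then the lattice CO(L) of compact-open subsets of L (with the Scott topology, ordered by inclusion) is an FDD-lattice: every compact-open set is a finite union of nonempty co-prime compact-open sets, and the intersection of any two nonempty co-prime compact-open sets is a finite union of pairwise disjoint nonempty co-prime compact-open sets. -/
section Domains

variable (P : Type*) [PartialOrder P]

/-- A dcpo: every nonempty directed subset has a least upper bound. -/
def DirectedComplete : Prop :=
  ∀ D : Set P, D.Nonempty → DirectedOn (· ≤ ·) D → ∃ s, IsLUB D s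

variable {P}

/-- A compact (finite) element of a poset. -/
def IsCompactElt (k : P) : Prop :=
  ∀ D : Set P, D.Nonempty → DirectedOn (· ≤ ·) D → ∀ s : P, IsLUB D s → k ≤ s →
    ∃ d ∈ D, k ≤ d

/-- A Scott-open subset: an upper set inaccessible by directed suprema. -/
def ScottOpen (U : Set P) : Prop :=
  IsUpperSet U ∧ ∀ D : Set P, D.Nonempty → DirectedOn (· ≤ ·) D → ∀ s : P, IsLUB D s →
    s ∈ U → (D ∩ U).Nonempty

/-- Compactness of a set with respect to covers by Scott-open sets. -/
def ScottCompactSet (K : Set P) : Prop :=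
  ∀ C : Set (Set P), (∀ V ∈ C, ScottOpen V) → K ⊆ ⋃₀ C →
    ∃ F : Finset (Set P), ↑F ⊆ C ∧ K ⊆ ⋃₀ (F : Set (Set P))

variable (P)

/-- The collection of compact-open subsets (w.r.t. the Scott topology). -/
def CO : Set (Set P) := {U | ScottOpen U ∧ ScottCompactSet U}

/-- An algebraic domain: a dcpo in which, for every `x`, the set of compact elements
below `x` is a (nonempty) directed set with least upper bound `x`. -/
def IsAlgebraicDomain : Prop :=
  DirectedComplete P ∧
  ∀ x : P,
    (Set.Iic x ∩ {k | IsCompactElt k}).Nonempty ∧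
    DirectedOn (· ≤ ·) (Set.Iic x ∩ {k | IsCompactElt k}) ∧
    IsLUB (Set.Iic x ∩ {k | IsCompactElt k}) x

/-- Every principal ideal `↓x` is a complete lattice in the induced order
(equivalently: every subset of `↓x` has a least upper bound inside `↓x`). -/
def PrincipalIdealsComplete : Prop :=
  ∀ x : P, ∀ S : Set P, S ⊆ Set.Iic x →
    ∃ s, s ≤ x ∧ (∀ a ∈ S, a ≤ s) ∧ ∀ u, u ≤ x → (∀ a ∈ S, a ≤ u) → s ≤ u

/-- An algebraic L-domain. -/
def IsAlgebraicLDomain : Prop := IsAlgebraicDomain P ∧ PrincipalIdealsComplete P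

/-- The Lawson topology: generated by the Scott-open sets together with complements
of principal filters. -/
def lawsonTopology : TopologicalSpace P :=
  TopologicalSpace.generateFrom ({U | ScottOpen U} ∪ {U | ∃ x : P, U = (Set.Ici x)ᶜ})

/-- Lawson compactness: compactness in the Lawson topology. -/
def LawsonCompact : Prop := @CompactSpace P (lawsonTopology P)

end Domains

section FDD

variable {L : Type*} [Lattice L] [BoundedOrder L]

/-- A nonzero co-prime element. -/
def CoprimeElt (a : L) : Prop :=
  a ≠ ⊥ ∧ ∀ x y : L, a ≤ x ⊔ y → a ≤ x ∨ a ≤ y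

/-- A finitely disjunctive distributive lattice (FDD-lattice): a bounded distributive
lattice in which (1) every element is a finite join of nonzero co-primes, and
(2) the meet of two nonzero co-primes is a finite join of pairwise disjoint
nonzero co-primes. -/
def IsFDD (L : Type*) [DistribLattice L] [BoundedOrder L] : Prop :=
  (∀ x : L, ∃ F : Finset L, (∀ a ∈ F, CoprimeElt a) ∧ x = F.sup id) ∧
  (∀ a b : L, CoprimeElt a → CoprimeElt b →
    ∃ F : Finset L, (∀ c ∈ F, CoprimeElt c) ∧
      (∀ c ∈ F, ∀ d ∈ F, c ≠ d → c ⊓ d = ⊥) ∧ a ⊓ b = F.sup id)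

/-- A point of a bounded lattice: a lattice homomorphism into the two-element
bounded lattice `Bool` preserving `0`, `1`, binary meets and binary joins. -/
def IsPoint (p : L → Bool) : Prop :=
  p ⊥ = false ∧ p ⊤ = true ∧
  (∀ x y : L, p (x ⊓ y) = (p x && p y)) ∧
  (∀ x y : L, p (x ⊔ y) = (p x || p y))

end FDD

/-- The poset of points of a bounded lattice, with the pointwise order. -/
def Pt (L : Type*) [Lattice L] [BoundedOrder L] : Type _ :=
  {p : L → Bool // IsPoint p}

noncomputable instance (L : Type*) [Lattice L] [BoundedOrder L] : PartialOrder (Pt L) :=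
  inferInstanceAs (PartialOrder {p : L → Bool // IsPoint p})

/-- `γ_a : L → {0,1}`, `γ_a x = 1` iff `a ≤ x`. -/
noncomputable def gammaPt {L : Type*} [Lattice L] [BoundedOrder L] (a : L) : L → Bool :=
  fun x => @decide (a ≤ x) (Classical.propDecidable _)

/-- A bounded lattice homomorphism. -/
def IsBLH {L M : Type*} [Lattice L] [BoundedOrder L] [Lattice M] [BoundedOrder M]
    (f : L → M) : Prop :=
  f ⊥ = ⊥ ∧ f ⊤ = ⊤ ∧ (∀ x y, f (x ⊓ y) = f x ⊓ f y) ∧ (∀ x y, f (x ⊔ y) = f x ⊔ f y)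

/-- A nonempty co-prime element of the lattice `CO P`. -/
def CoprimeCO (P : Type*) [PartialOrder P] (U : Set P) : Prop :=
  U ∈ CO P ∧ U ≠ ∅ ∧ ∀ V ∈ CO P, ∀ W ∈ CO P, U ⊆ V ∪ W → U ⊆ V ∨ U ⊆ W

/-!
For a compact element `k` the principal filter `↑k` is compact-open and co-prime, and by
algebraicity every compact-open set is a finite union of such filters; a co-prime one is
therefore a single `↑k`. Lawson compactness makes every Lawson-closed set Scott-compact, and
compact-open sets, being finite unions of the Lawson-closed `↑k`, are Lawson closed, so `CO P`
is closed under intersection. In an L-domain `↑a ∩ ↑b` is the union of the `↑m` over the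
minimal upper bounds `m` of `a` and `b`; two distinct ones have no common upper bound (both
would be the join of `a` and `b` in `↓x`), and for compact `a`, `b` they are compact, so
compactness of `↑a ∩ ↑b` leaves finitely many of these disjoint filters.
-/

open Set

section Scott

variable {P : Type*} [PartialOrder P]

lemma scottOpen_Ici {k : P} (hk : IsCompactElt k) : ScottOpen (Ici k) :=
  ⟨fun _ _ hxy hx => le_trans hx hxy, fun D hne hdir s hs hks => hk D hne hdir s hs hks⟩

lemma scottCompactSet_Ici (k : P) : ScottCompactSet (Ici k) := by
  intro C hC hkC
  obtain ⟨V, hV, hkV⟩ := hkC (mem_Ici.mpr le_rfl)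
  exact ⟨{V}, by simpa using hV, fun x hx => ⟨V, by simp, (hC V hV).1 hx hkV⟩⟩

lemma Ici_mem_CO {k : P} (hk : IsCompactElt k) : Ici k ∈ CO P :=
  ⟨scottOpen_Ici hk, scottCompactSet_Ici k⟩

lemma coprimeCO_Ici {k : P} (hk : IsCompactElt k) : CoprimeCO P (Ici k) := by
  refine ⟨Ici_mem_CO hk, nonempty_Ici.ne_empty, fun V hV W hW hVW => ?_⟩
  rcases hVW (mem_Ici.mpr le_rfl) with hkV | hkW
  · exact Or.inl fun _ hx => hV.1.1 hx hkV
  · exact Or.inr fun _ hx => hW.1.1 hx hkW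

lemma ScottOpen.union {U V : Set P} (hU : ScottOpen U) (hV : ScottOpen V) :
    ScottOpen (U ∪ V) := by
  refine ⟨hU.1.union hV.1, fun D hne hdir s hs hsUV => ?_⟩
  rcases hsUV with hsU | hsV
  · exact (hU.2 D hne hdir s hs hsU).mono (inter_subset_inter_right D subset_union_left)
  · exact (hV.2 D hne hdir s hs hsV).mono (inter_subset_inter_right D subset_union_right)

lemma ScottOpen.inter {U V : Set P} (hU : ScottOpen U) (hV : ScottOpen V) :
    ScottOpen (U ∩ V) := by
  refine ⟨hU.1.inter hV.1, fun D hne hdir s hs hsUV => ?_⟩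
  obtain ⟨d₁, hd₁, hd₁U⟩ := hU.2 D hne hdir s hs hsUV.1
  obtain ⟨d₂, hd₂, hd₂V⟩ := hV.2 D hne hdir s hs hsUV.2
  obtain ⟨d, hd, hd₁d, hd₂d⟩ := hdir d₁ hd₁ d₂ hd₂
  exact ⟨d, hd, hU.1 hd₁d hd₁U, hV.1 hd₂d hd₂V⟩

lemma ScottCompactSet.union {K L : Set P} (hK : ScottCompactSet K) (hL : ScottCompactSet L) :
    ScottCompactSet (K ∪ L) := by
  classical
  intro C hC hKL
  obtain ⟨F, hFC, hKF⟩ := hK C hC (subset_union_left.trans hKL)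
  obtain ⟨G, hGC, hLG⟩ := hL C hC (subset_union_right.trans hKL)
  refine ⟨F ∪ G, by simpa using union_subset hFC hGC, ?_⟩
  rw [Finset.coe_union, sUnion_union]
  exact union_subset_union hKF hLG

lemma ScottCompactSet.exists_finset_subset_biUnion {ι : Type*} {K : Set P}
    (hK : ScottCompactSet K) {S : Set ι} {f : ι → Set P} (hf : ∀ i ∈ S, ScottOpen (f i))
    (hKS : K ⊆ ⋃ i ∈ S, f i) : ∃ M : Finset ι, ↑M ⊆ S ∧ K ⊆ ⋃ i ∈ M, f i := by
  classical
  obtain ⟨F, hFS, hKF⟩ := hK (f '' S) (forall_mem_image.mpr hf) (by rwa [sUnion_image])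
  obtain ⟨M, hMS, rfl⟩ := Finset.subset_set_image_iff.mp hFS
  exact ⟨M, hMS, by simpa [sUnion_image] using hKF⟩

lemma empty_mem_CO : (∅ : Set P) ∈ CO P :=
  ⟨⟨isUpperSet_empty, fun _ _ _ _ _ h => h.elim⟩, fun _ _ _ => ⟨∅, by simp⟩⟩

lemma union_mem_CO {U V : Set P} (hU : U ∈ CO P) (hV : V ∈ CO P) : U ∪ V ∈ CO P :=
  ⟨hU.1.union hV.1, hU.2.union hV.2⟩

lemma biUnion_mem_CO {ι : Type*} (s : Finset ι) {f : ι → Set P} (hf : ∀ i ∈ s, f i ∈ CO P) :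
    ⋃ i ∈ s, f i ∈ CO P := by
  classical
  induction s using Finset.induction_on with
  | empty => simpa using empty_mem_CO
  | insert i s _ ih =>
    rw [Finset.set_biUnion_insert]
    exact union_mem_CO (hf i (s.mem_insert_self i))
      (ih fun j hj => hf j (Finset.mem_insert_of_mem hj))

lemma exists_finset_compactElt_eq_biUnion_Ici (h : IsAlgebraicDomain P) {U : Set P}
    (hU : U ∈ CO P) :
    ∃ M : Finset P, ↑M ⊆ {k | IsCompactElt k ∧ k ∈ U} ∧ U = ⋃ k ∈ M, Ici k := by
  have hcover : U ⊆ ⋃ k ∈ {k | IsCompactElt k ∧ k ∈ U}, Ici k := by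
    intro x hx
    obtain ⟨hne, hdir, hlub⟩ := h.2 x
    obtain ⟨k, ⟨hkx, hk⟩, hkU⟩ := hU.1.2 _ hne hdir x hlub hx
    exact mem_biUnion ⟨hk, hkU⟩ hkx
  obtain ⟨M, hMU, hUM⟩ :=
    hU.2.exists_finset_subset_biUnion (fun k hk => scottOpen_Ici hk.1) hcover
  refine ⟨M, hMU, hUM.antisymm (iUnion₂_subset fun k hk => ?_)⟩
  exact fun _ hx => hU.1.1 hx (hMU hk).2

lemma CoprimeCO.exists_subset_of_subset_biUnion {ι : Type*} {U : Set P} (hU : CoprimeCO P U)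
    (s : Finset ι) {f : ι → Set P} (hf : ∀ i ∈ s, f i ∈ CO P) (hUs : U ⊆ ⋃ i ∈ s, f i) :
    ∃ i ∈ s, U ⊆ f i := by
  classical
  induction s using Finset.induction_on with
  | empty => exact absurd (subset_empty_iff.mp (by simpa using hUs)) hU.2.1
  | insert i s _ ih =>
    have hs : ∀ j ∈ s, f j ∈ CO P := fun j hj => hf j (Finset.mem_insert_of_mem hj)
    rw [Finset.set_biUnion_insert] at hUs
    rcases hU.2.2 _ (hf i (s.mem_insert_self i)) _ (biUnion_mem_CO s hs) hUs with hUi | hUs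
    · exact ⟨i, s.mem_insert_self i, hUi⟩
    · obtain ⟨j, hj, hUj⟩ := ih hs hUs
      exact ⟨j, Finset.mem_insert_of_mem hj, hUj⟩

lemma CoprimeCO.exists_eq_Ici (h : IsAlgebraicDomain P) {U : Set P} (hU : CoprimeCO P U) :
    ∃ k, IsCompactElt k ∧ U = Ici k := by
  obtain ⟨M, hMU, hUM⟩ := exists_finset_compactElt_eq_biUnion_Ici h hU.1
  obtain ⟨k, hk, hUk⟩ := hU.exists_subset_of_subset_biUnion M
    (fun k hk => Ici_mem_CO (hMU hk).1) hUM.subset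
  exact ⟨k, (hMU hk).1, hUk.antisymm (hUM ▸ subset_biUnion_of_mem (u := fun k => Ici k) hk)⟩

end Scott

section Lawson

open Topology

variable {P : Type*} [PartialOrder P]

lemma ScottOpen.isOpen_lawson {U : Set P} (hU : ScottOpen U) : IsOpen[lawsonTopology P] U :=
  TopologicalSpace.GenerateOpen.basic _ (Or.inl hU)

lemma isClosed_lawson_Ici (k : P) : IsClosed[lawsonTopology P] (Ici k) :=
  @isOpen_compl_iff P _ (lawsonTopology P) |>.mp
    (TopologicalSpace.GenerateOpen.basic _ (Or.inr ⟨k, rfl⟩))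

lemma scottCompactSet_of_isClosed_lawson (h : LawsonCompact P) {K : Set P}
    (hK : IsClosed[lawsonTopology P] K) : ScottCompactSet K := by
  let := lawsonTopology P
  have : CompactSpace P := h
  intro C hC hKC
  obtain ⟨F, hFC, hFfin, hKF⟩ := hK.isCompact.elim_finite_subcover_image
    (b := C) (c := fun V => V) (fun V hV => (hC V hV).isOpen_lawson)
    (by rwa [sUnion_eq_biUnion] at hKC)
  exact ⟨hFfin.toFinset, by simpa using hFC, by simpa [sUnion_eq_biUnion] using hKF⟩

lemma isClosed_lawson_of_mem_CO (h : IsAlgebraicDomain P) {U : Set P} (hU : U ∈ CO P) :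
    IsClosed[lawsonTopology P] U := by
  let := lawsonTopology P
  obtain ⟨M, -, rfl⟩ := exists_finset_compactElt_eq_biUnion_Ici h hU
  exact isClosed_biUnion_finset fun k _ => isClosed_lawson_Ici k

lemma inter_mem_CO (h₁ : IsAlgebraicDomain P) (h₂ : LawsonCompact P) {U V : Set P}
    (hU : U ∈ CO P) (hV : V ∈ CO P) : U ∩ V ∈ CO P :=
  ⟨hU.1.inter hV.1, scottCompactSet_of_isClosed_lawson h₂
    (@IsClosed.inter P _ _ (lawsonTopology P) (isClosed_lawson_of_mem_CO h₁ hU)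
      (isClosed_lawson_of_mem_CO h₁ hV))⟩

lemma univ_mem_CO (h : LawsonCompact P) : (univ : Set P) ∈ CO P :=
  ⟨⟨isUpperSet_univ, fun _ hne _ _ _ _ => hne.mono fun _ hd => ⟨hd, trivial⟩⟩,
    scottCompactSet_of_isClosed_lawson h (@isClosed_univ P (lawsonTopology P))⟩

end Lawson

section MinimalUpperBounds

variable {P : Type*} [PartialOrder P]

namespace PrincipalIdealsComplete

variable (hP : PrincipalIdealsComplete P)
include hP

lemma exists_minimal_upperBounds_le {S : Set P} {y : P} (hSy : S ⊆ Iic y) :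
    ∃ m, Minimal (· ∈ upperBounds S) m ∧ m ≤ y := by
  obtain ⟨s, hsy, hSs, hleast⟩ := hP y S hSy
  exact ⟨s, ⟨hSs, fun u hSu hus => hleast u (hus.trans hsy) hSu⟩, hsy⟩

lemma eq_of_minimal_upperBounds {S : Set P} {m m' y : P}
    (hm : Minimal (· ∈ upperBounds S) m) (hm' : Minimal (· ∈ upperBounds S) m')
    (hmy : m ≤ y) (hm'y : m' ≤ y) : m = m' := by
  obtain ⟨s, -, hSs, hleast⟩ := hP y S fun z hz => (hm.prop hz).trans hmy
  have eq_join : ∀ n, Minimal (· ∈ upperBounds S) n → n ≤ y → n = s := fun n hn hny =>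
    (hn.le_of_le hSs (hleast n hny hn.prop)).antisymm (hleast n hny hn.prop)
  exact (eq_join m hm hmy).trans (eq_join m' hm' hm'y).symm

lemma upperBounds_eq_biUnion_Ici (S : Set P) :
    upperBounds S = ⋃ m ∈ {m | Minimal (· ∈ upperBounds S) m}, Ici m := by
  refine subset_antisymm (fun x hx => ?_) (iUnion₂_subset fun m hm => ?_)
  · obtain ⟨m, hm, hmx⟩ := hP.exists_minimal_upperBounds_le (S := S) (y := x) hx
    exact mem_biUnion hm hmx
  · exact fun x hmx => upperBounds_mono_mem hmx hm.prop

lemma Ici_inter_Ici_eq_empty {S : Set P} {m m' : P} (hm : Minimal (· ∈ upperBounds S) m)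
    (hm' : Minimal (· ∈ upperBounds S) m') (hne : m ≠ m') : Ici m ∩ Ici m' = ∅ :=
  eq_empty_of_forall_notMem fun _ ⟨hmx, hm'x⟩ =>
    hne (hP.eq_of_minimal_upperBounds hm hm' hmx hm'x)

lemma isCompactElt_of_minimal_upperBounds_pair {a b m : P} (ha : IsCompactElt a)
    (hb : IsCompactElt b) (hm : Minimal (· ∈ upperBounds {a, b}) m) : IsCompactElt m := by
  intro D hne hdir s hs hms
  have hab : a ≤ m ∧ b ≤ m := by simpa [upperBounds_insert] using hm.prop
  obtain ⟨d₁, hd₁, had₁⟩ := ha D hne hdir s hs (hab.1.trans hms)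
  obtain ⟨d₂, hd₂, hbd₂⟩ := hb D hne hdir s hs (hab.2.trans hms)
  obtain ⟨d, hd, hd₁d, hd₂d⟩ := hdir d₁ hd₁ d₂ hd₂
  obtain ⟨m', hm', hm'd⟩ := hP.exists_minimal_upperBounds_le (S := {a, b}) (y := d)
    (by simpa [insert_subset_iff] using ⟨had₁.trans hd₁d, hbd₂.trans hd₂d⟩)
  exact ⟨d, hd, (hP.eq_of_minimal_upperBounds hm hm' hms (hm'd.trans (hs.1 hd))).trans_le hm'd⟩

end PrincipalIdealsComplete

lemma exists_finset_minimal_upperBounds_pair (h₁ : IsAlgebraicLDomain P)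
    (h₂ : LawsonCompact P) {a b : P} (ha : IsCompactElt a) (hb : IsCompactElt b) :
    ∃ M : Finset P, ↑M ⊆ {m | Minimal (· ∈ upperBounds {a, b}) m} ∧
      Ici a ∩ Ici b = ⋃ m ∈ M, Ici m := by
  have hab : Ici a ∩ Ici b = upperBounds {a, b} := by
    rw [upperBounds_insert, upperBounds_singleton]
  obtain ⟨M, hMmin, hcover⟩ := (inter_mem_CO h₁.1 h₂ (Ici_mem_CO ha) (Ici_mem_CO hb)).2
    |>.exists_finset_subset_biUnion
      (fun m hm => scottOpen_Ici (h₁.2.isCompactElt_of_minimal_upperBounds_pair ha hb hm))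
      (hab.trans (h₁.2.upperBounds_eq_biUnion_Ici _)).subset
  refine ⟨M, hMmin, hcover.antisymm ?_⟩
  rw [hab, h₁.2.upperBounds_eq_biUnion_Ici]
  exact biUnion_subset_biUnion_left hMmin

end MinimalUpperBounds

/-- For a Lawson compact algebraic L-domain `P`, the bounded distributive
lattice `CO P` is an FDD-lattice: every compact-open set is a finite union of nonempty
co-prime compact-open sets, and the intersection of two nonempty co-prime compact-open
sets is a finite union of pairwise disjoint nonempty co-prime compact-open sets. -/
theorem stmt2 (P : Type*) [PartialOrder P]
    (h1 : IsAlgebraicLDomain P) (h2 : LawsonCompact P) :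
    ((∅ : Set P) ∈ CO P ∧ (Set.univ : Set P) ∈ CO P ∧
      ∀ U ∈ CO P, ∀ V ∈ CO P, U ∪ V ∈ CO P ∧ U ∩ V ∈ CO P) ∧
    (∀ U ∈ CO P, ∃ F : Finset (Set P),
      (∀ V ∈ F, CoprimeCO P V) ∧ U = ⋃₀ (F : Set (Set P))) ∧
    (∀ U V : Set P, CoprimeCO P U → CoprimeCO P V →
      ∃ F : Finset (Set P), (∀ W ∈ F, CoprimeCO P W) ∧
        (∀ W ∈ F, ∀ W' ∈ F, W ≠ W' → W ∩ W' = ∅) ∧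
        U ∩ V = ⋃₀ (F : Set (Set P))) := by
  classical
  refine ⟨⟨empty_mem_CO, univ_mem_CO h2, fun U hU V hV =>
    ⟨union_mem_CO hU hV, inter_mem_CO h1.1 h2 hU hV⟩⟩, fun U hU => ?_, fun U V hU hV => ?_⟩
  · obtain ⟨M, hM, rfl⟩ := exists_finset_compactElt_eq_biUnion_Ici h1.1 hU
    refine ⟨M.image Ici, Finset.forall_mem_image.mpr fun k hk => coprimeCO_Ici (hM hk).1, ?_⟩
    simp [sUnion_image]
  · obtain ⟨a, ha, rfl⟩ := hU.exists_eq_Ici h1.1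
    obtain ⟨b, hb, rfl⟩ := hV.exists_eq_Ici h1.1
    obtain ⟨M, hM, hab⟩ := exists_finset_minimal_upperBounds_pair h1 h2 ha hb
    refine ⟨M.image Ici, Finset.forall_mem_image.mpr fun m hm =>
      coprimeCO_Ici (h1.2.isCompactElt_of_minimal_upperBounds_pair ha hb (hM hm)), ?_, ?_⟩
    · simp only [Finset.mem_image]
      rintro _ ⟨m, hm, rfl⟩ _ ⟨m', hm', rfl⟩ hne
      exact h1.2.Ici_inter_Ici_eq_empty (hM hm) (hM hm') (ne_of_apply_ne Ici hne)
    · simp [hab, sUnion_image]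
end

section
/- Let L be an FDD-lattice and p a point of L. Then p is the supremum in pt(L) of the directed set H_p = {γ_a : a ∈ Cp(L), γ_a ≤ p}; equivalently, for every x ∈ L, p(x) = 1 if and only if γ_a(x) = 1 for some a ∈ Cp(L) with γ_a ≤ p. -/
/-!
A point `p` is a join-preserving map into `Bool`, so if `p x = 1` and `x` is a finite join of
co-primes, then `p a = 1` for one of them, `a`. Monotonicity of `p` gives `γ_a ≤ p`, and
`γ_a x = 1` because `a ≤ x`. So the points `γ_a ≤ p` already detect every `x` with `p x = 1`,
which is what makes `p` their supremum.
-/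

lemma Bool.finset_sup_eq_true_iff {ι : Type*} (F : Finset ι) (g : ι → Bool) :
    F.sup g = true ↔ ∃ i ∈ F, g i = true := by
  have eq_true_iff : ∀ b : Bool, b = true ↔ ⊥ < b := by decide
  simp only [eq_true_iff, Finset.lt_sup_iff]

section Points

variable {L : Type*} [Lattice L] [BoundedOrder L] {p : L → Bool}

@[simp]
lemma gammaPt_eq_true {a x : L} : gammaPt a x = true ↔ a ≤ x := by
  simp [gammaPt]

lemma gammaPt_isPoint {a : L} (ha : CoprimeElt a) : IsPoint (gammaPt a) := by
  refine ⟨?_, ?_, fun x y => ?_, fun x y => ?_⟩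
  · simpa [gammaPt] using ha.1
  · simp [gammaPt]
  · apply Bool.eq_iff_iff.mpr
    simp
  · apply Bool.eq_iff_iff.mpr
    simpa using ⟨ha.2 x y, fun h => h.elim le_sup_of_le_left le_sup_of_le_right⟩

def IsPoint.toSupBotHom (hp : IsPoint p) : SupBotHom L Bool :=
  ⟨⟨p, hp.2.2.2⟩, hp.1⟩

lemma IsPoint.monotone (hp : IsPoint p) : Monotone p :=
  OrderHomClass.mono hp.toSupBotHom

lemma IsPoint.finset_sup_eq_true_iff (hp : IsPoint p) {ι : Type*} (F : Finset ι) (f : ι → L) :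
    p (F.sup f) = true ↔ ∃ i ∈ F, p (f i) = true := by
  have map_sup : p (F.sup f) = F.sup (p ∘ f) := map_finset_sup hp.toSupBotHom F f
  rw [map_sup, Bool.finset_sup_eq_true_iff]
  rfl

lemma IsPoint.eq_true_of_le (hp : IsPoint p) {a x : L} (hax : a ≤ x) (ha : p a = true) :
    p x = true :=
  Bool.le_iff_imp.mp (hp.monotone hax) ha

lemma gammaPt_le_iff (hp : IsPoint p) {a : L} : gammaPt a ≤ p ↔ p a = true :=
  ⟨fun h => Bool.le_iff_imp.mp (h a) (by simp),
    fun ha x => Bool.le_iff_imp.mpr fun hax => hp.eq_true_of_le (gammaPt_eq_true.mp hax) ha⟩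

lemma IsPoint.eq_true_iff_exists_coprime (hp : IsPoint p) {x : L}
    (hx : ∃ F : Finset L, (∀ a ∈ F, CoprimeElt a) ∧ x = F.sup id) :
    p x = true ↔ ∃ a, CoprimeElt a ∧ p a = true ∧ a ≤ x := by
  refine ⟨fun hpx => ?_, fun ⟨a, _, hpa, hax⟩ => hp.eq_true_of_le hax hpa⟩
  obtain ⟨F, hF, rfl⟩ := hx
  obtain ⟨a, haF, hpa⟩ := (hp.finset_sup_eq_true_iff F id).mp hpx
  exact ⟨a, hF a haF, hpa, Finset.le_sup (f := id) haF⟩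

end Points

/-- For an FDD-lattice `L` and a point `p`, `p` is the supremum in `Pt L`
of the directed set `H_p = {γ_a : a ∈ Cp(L), γ_a ≤ p}`; equivalently, for every `x`,
`p x = 1` iff `γ_a x = 1` for some nonzero co-prime `a` with `γ_a ≤ p`. -/
theorem stmt6 {L : Type*} [DistribLattice L] [BoundedOrder L] (hL : IsFDD L)
    (p : Pt L) :
    IsLUB {q : Pt L | ∃ a : L, CoprimeElt a ∧ q.1 = gammaPt a ∧ q ≤ p} p ∧
    (∀ x : L, p.1 x = true ↔
      ∃ a : L, CoprimeElt a ∧ gammaPt a ≤ p.1 ∧ gammaPt a x = true) := by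
  have detect (x : L) :
      p.1 x = true ↔ ∃ a : L, CoprimeElt a ∧ gammaPt a ≤ p.1 ∧ gammaPt a x = true := by
    simp only [gammaPt_le_iff p.2, gammaPt_eq_true]
    exact p.2.eq_true_iff_exists_coprime (hL.1 x)
  refine ⟨⟨fun q ⟨_, _, _, hqp⟩ => hqp, fun u hu x => Bool.le_iff_imp.mpr fun hpx => ?_⟩, detect⟩
  obtain ⟨a, ha, hap, hax⟩ := (detect x).mp hpx
  have hγu : (⟨gammaPt a, gammaPt_isPoint ha⟩ : Pt L) ≤ u := hu ⟨a, ha, rfl, hap⟩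
  exact Bool.le_iff_imp.mp (hγu x) hax
end

section
/- Let L be an FDD-lattice and a, b ∈ L with a ≰ b. Then there exists a point p of L such that p(a) = 1 and p(b) = 0. -/
section Points

variable {L : Type*} [Lattice L] [BoundedOrder L]

theorem gammaPt_eq_true_iff (c x : L) : gammaPt c x = true ↔ c ≤ x := by
  simp [gammaPt]

theorem gammaPt_eq_false_iff (c x : L) : gammaPt c x = false ↔ ¬ c ≤ x := by
  simp [gammaPt]

theorem CoprimeElt.isPoint_gammaPt {c : L} (hc : CoprimeElt c) : IsPoint (gammaPt c) := by
  have le_sup_iff (x y : L) : c ≤ x ⊔ y ↔ c ≤ x ∨ c ≤ y :=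
    ⟨hc.2 x y, fun h => h.elim le_sup_of_le_left le_sup_of_le_right⟩
  refine ⟨?_, ?_, fun x y => ?_, fun x y => ?_⟩
  · simpa [gammaPt_eq_false_iff, le_bot_iff] using hc.1
  · simp [gammaPt_eq_true_iff]
  · rw [Bool.eq_iff_iff, Bool.and_eq_true, gammaPt_eq_true_iff, gammaPt_eq_true_iff,
      gammaPt_eq_true_iff, le_inf_iff]
  · rw [Bool.eq_iff_iff, Bool.or_eq_true, gammaPt_eq_true_iff, gammaPt_eq_true_iff,
      gammaPt_eq_true_iff, le_sup_iff]

theorem exists_coprimeElt_le_not_le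
    {a b : L} (ha : ∃ F : Finset L, (∀ c ∈ F, CoprimeElt c) ∧ a = F.sup id)
    (hab : ¬ a ≤ b) : ∃ c, CoprimeElt c ∧ c ≤ a ∧ ¬ c ≤ b := by
  obtain ⟨F, hF, rfl⟩ := ha
  obtain ⟨c, hcF, hcb⟩ : ∃ c ∈ F, ¬ c ≤ b := by
    simpa only [Finset.sup_le_iff, id, not_forall, exists_prop] using hab
  exact ⟨c, hF c hcF, Finset.le_sup (f := id) hcF, hcb⟩

end Points

/-- For an FDD-lattice `L` and elements `a ≰ b`, there is a point `p`
with `p a = 1` and `p b = 0`. -/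
theorem stmt11 {L : Type*} [DistribLattice L] [BoundedOrder L] (hL : IsFDD L)
    (a b : L) (hab : ¬ a ≤ b) :
    ∃ p : L → Bool, IsPoint p ∧ p a = true ∧ p b = false := by
  obtain ⟨c, hc, hca, hcb⟩ := exists_coprimeElt_le_not_le (hL.1 a) hab
  exact ⟨gammaPt c, hc.isPoint_gammaPt, (gammaPt_eq_true_iff c a).2 hca,
    (gammaPt_eq_false_iff c b).2 hcb⟩
end
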